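/- arXiv:1902.01524 — 6 statements merged into one kernel-verified Lean document; each statement's English description precedes it below -/
import Mathlib

section
/- Let m ≥ 1 and let p : Fin m → ℤ and q, r : Fin (m-1) → ℤ. Let M be the m×m tridiagonal integer matrix whose diagonal entries are M_{i,i} = p_i, whose superdiagonal entries are M_{i,i+1} = q_i, whose subdiagonal entries are M_{i+1,i} = r_i, and all of whose other entries are 0. If |q_i| + |r_i| = 1 for every index i, then det M = ∏_{i=1}^{m} p_i. -/
private lemma tridiag_aux : ∀ (n : ℕ) (p : Fin (n+1) → ℤ) (q r : Fin n → ℤ)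
    (M : Matrix (Fin (n+1)) (Fin (n+1)) ℤ),
    (∀ i, M i i = p i) →
    (∀ i : Fin n, M i.castSucc i.succ = q i) →
    (∀ i : Fin n, M i.succ i.castSucc = r i) →
    (∀ i j : Fin (n+1), (i:ℕ) ≠ (j:ℕ) → (j:ℕ) ≠ (i:ℕ)+1 → (i:ℕ) ≠ (j:ℕ)+1 → M i j = 0) →
    (∀ i, q i * r i = 0) → M.det = ∏ i, p i := by
  intro n
  induction n with
  | zero =>
    intro p q r M hd _ _ _ _
    simp [Matrix.det_fin_one, hd]
  | succ n ih =>
    intro p q r M hd hsup hsub hz hqr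
    have key : M.det = p 0 * (M.submatrix Fin.succ Fin.succ).det := by
      rcases mul_eq_zero.mp (hqr 0) with h0 | h0
      · -- q 0 = 0 : expand along first row
        rw [Matrix.det_succ_row_zero]
        rw [Fin.sum_univ_succ, Fin.sum_univ_succ]
        have e1 : M 0 1 = 0 := by
          have := hsup 0
          simpa [h0, Fin.succ_zero_eq_one, Fin.castSucc_zero] using this
        have e2 : ∀ i : Fin n, M 0 (Fin.succ (Fin.succ i)) = 0 := by
          intro i
          apply hz <;> simp
        simp [e1, e2, hd 0, Fin.succAbove_zero]
      · -- r 0 = 0 : expand along first column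
        rw [Matrix.det_succ_column_zero]
        rw [Fin.sum_univ_succ, Fin.sum_univ_succ]
        have e1 : M 1 0 = 0 := by
          have := hsub 0
          simpa [h0, Fin.succ_zero_eq_one, Fin.castSucc_zero] using this
        have e2 : ∀ i : Fin n, M (Fin.succ (Fin.succ i)) 0 = 0 := by
          intro i
          apply hz <;> simp
        simp [e1, e2, hd 0, Fin.succAbove_zero]
    rw [key]
    have := ih (fun i => p i.succ) (fun i => q i.succ) (fun i => r i.succ)
      (M.submatrix Fin.succ Fin.succ)
      (fun i => hd i.succ)
      (fun i => by
        have := hsup i.succ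
        simpa only [Matrix.submatrix_apply, Fin.succ_castSucc] using this)
      (fun i => by
        have := hsub i.succ
        simpa only [Matrix.submatrix_apply, Fin.succ_castSucc] using this)
      (fun i j h1 h2 h3 => by
        apply hz <;> simp <;> omega)
      (fun i => hqr i.succ)
    simp [this, Fin.prod_univ_succ]

/-- Lemma 4.9 of the paper (determinant computation): a tridiagonal integer
matrix whose super- and subdiagonal entries satisfy `|q i| + |r i| = 1` has
determinant equal to the product of its diagonal entries. -/
theorem tridiagonal_det_int (m : ℕ) (hm : 1 ≤ m)
    (p : Fin m → ℤ) (q r : Fin (m - 1) → ℤ)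
    (M : Matrix (Fin m) (Fin m) ℤ)
    (hdiag : ∀ i : Fin m, M i i = p i)
    (hsup : ∀ i : Fin (m - 1),
      M ⟨i.1, by have h := i.2; omega⟩ ⟨i.1 + 1, by have h := i.2; omega⟩ = q i)
    (hsub : ∀ i : Fin (m - 1),
      M ⟨i.1 + 1, by have h := i.2; omega⟩ ⟨i.1, by have h := i.2; omega⟩ = r i)
    (hzero : ∀ i j : Fin m, (i : ℕ) ≠ (j : ℕ) → (j : ℕ) ≠ (i : ℕ) + 1 →
      (i : ℕ) ≠ (j : ℕ) + 1 → M i j = 0)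
    (habs : ∀ i : Fin (m - 1), |q i| + |r i| = 1) :
    M.det = ∏ i, p i := by
  obtain ⟨n, rfl⟩ : ∃ n, m = n + 1 := ⟨m - 1, by omega⟩
  apply tridiag_aux n p q r M hdiag
  · intro i; exact hsup i
  · intro i; exact hsub i
  · exact hzero
  · intro i
    have h := habs i
    have h1 := abs_nonneg (q i)
    have h2 := abs_nonneg (r i)
    have : |q i| = 0 ∨ |r i| = 0 := by omega
    rcases this with h' | h'
    · rw [abs_eq_zero.mp h', zero_mul]
    · rw [abs_eq_zero.mp h', mul_zero]
end

section
/- The group homomorphism φ : F₅ → F₅ determined on the generators by φ(γ₁) = u₁⁻¹u₅u₁⁻¹, φ(γ₂) = u₂u₅⁻¹u₁, φ(γ₃) = u₃u₂⁻¹, φ(γ₄) = u₁u₄⁻¹u₃, and φ(γ₅) = u₁u₃⁻¹u₄u₁⁻¹ is bijective, i.e. it is an automorphism of the free group of rank 5. -/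
/-- The Stallings map of Example 4.6 of the paper is an automorphism of the
free group of rank 5.  Here `γᵢ = uᵢ = FreeGroup.of (i-1)`. -/
theorem stallings_map_bijective (φ : FreeGroup (Fin 5) →* FreeGroup (Fin 5))
    (h1 : φ (FreeGroup.of 0) =
      (FreeGroup.of 0)⁻¹ * FreeGroup.of 4 * (FreeGroup.of 0)⁻¹)
    (h2 : φ (FreeGroup.of 1) =
      FreeGroup.of 1 * (FreeGroup.of 4)⁻¹ * FreeGroup.of 0)
    (h3 : φ (FreeGroup.of 2) =
      FreeGroup.of 2 * (FreeGroup.of 1)⁻¹)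
    (h4 : φ (FreeGroup.of 3) =
      FreeGroup.of 0 * (FreeGroup.of 3)⁻¹ * FreeGroup.of 2)
    (h5 : φ (FreeGroup.of 4) =
      FreeGroup.of 0 * (FreeGroup.of 2)⁻¹ * FreeGroup.of 3 * (FreeGroup.of 0)⁻¹) :
    Function.Bijective φ := by
  set a : FreeGroup (Fin 5) := FreeGroup.of 0 with ha
  set b : FreeGroup (Fin 5) := FreeGroup.of 1 with hb
  set c : FreeGroup (Fin 5) := FreeGroup.of 2 with hc
  set d : FreeGroup (Fin 5) := FreeGroup.of 3 with hd
  set e : FreeGroup (Fin 5) := FreeGroup.of 4 with he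
  let ψ : FreeGroup (Fin 5) →* FreeGroup (Fin 5) :=
    FreeGroup.lift (fun i : Fin 5 =>
      match i with
      | 0 => e * d
      | 1 => b * a * e * d
      | 2 => c * b * a * e * d
      | 3 => c * b * a * e * e * d
      | 4 => e * d * a * e * d)
  have hψ0 : ψ a = e * d := FreeGroup.lift_apply_of
  have hψ1 : ψ b = b * a * e * d := FreeGroup.lift_apply_of
  have hψ2 : ψ c = c * b * a * e * d := FreeGroup.lift_apply_of
  have hψ3 : ψ d = c * b * a * e * e * d := FreeGroup.lift_apply_of
  have hψ4 : ψ e = e * d * a * e * d := FreeGroup.lift_apply_of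
  have hl : ψ.comp φ = MonoidHom.id _ := by
    apply FreeGroup.ext_hom
    intro i
    fin_cases i
    · show ψ (φ a) = a
      rw [h1]; simp only [map_mul, map_inv, hψ0, hψ4]; group
    · show ψ (φ b) = b
      rw [h2]; simp only [map_mul, map_inv, hψ1, hψ4, hψ0]; group
    · show ψ (φ c) = c
      rw [h3]; simp only [map_mul, map_inv, hψ2, hψ1]; group
    · show ψ (φ d) = d
      rw [h4]; simp only [map_mul, map_inv, hψ0, hψ3, hψ2]; group
    · show ψ (φ e) = e
      rw [h5]; simp only [map_mul, map_inv, hψ0, hψ2, hψ3]; group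
  have hr : φ.comp ψ = MonoidHom.id _ := by
    apply FreeGroup.ext_hom
    intro i
    fin_cases i
    · show φ (ψ a) = a
      rw [hψ0]; simp only [map_mul, h4, h5]; group
    · show φ (ψ b) = b
      rw [hψ1]; simp only [map_mul, h1, h2, h4, h5]; group
    · show φ (ψ c) = c
      rw [hψ2]; simp only [map_mul, h1, h2, h3, h4, h5]; group
    · show φ (ψ d) = d
      rw [hψ3]; simp only [map_mul, h1, h2, h3, h4, h5]; group
    · show φ (ψ e) = e
      rw [hψ4]; simp only [map_mul, h1, h4, h5]; group
  exact Function.bijective_iff_has_inverse.mpr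
    ⟨ψ, fun x => by rw [← MonoidHom.comp_apply, hl, MonoidHom.id_apply],
       fun x => by rw [← MonoidHom.comp_apply, hr, MonoidHom.id_apply]⟩
end

section
/- Let φ : F₅ → F₅ be the group homomorphism determined on generators by φ(γ₁) = u₁⁻¹u₅u₁⁻¹, φ(γ₂) = u₂u₅⁻¹u₁, φ(γ₃) = u₃u₂⁻¹, φ(γ₄) = u₁u₄⁻¹u₃, φ(γ₅) = u₁u₃⁻¹u₄u₁⁻¹, and let ψ : F₅ → F₅ be the group homomorphism determined on generators by ψ(u₁) = γ₅γ₄, ψ(u₂) = γ₂γ₁γ₅γ₄, ψ(u₃) = γ₃γ₂γ₁γ₅γ₄, ψ(u₄) = γ₃γ₂γ₁γ₅²γ₄, ψ(u₅) = γ₅γ₄γ₁γ₅γ₄. Then the composition φ ∘ ψ is the identity homomorphism of F₅. -/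
/-- Example 4.6 of the paper: the composition `φ ∘ ψ` of the Stallings map `φ`
with the explicit map `ψ` is the identity of the free group of rank 5.
Here `γᵢ = uᵢ = FreeGroup.of (i-1)`. -/
theorem stallings_map_comp_inverse_eq_id
    (φ ψ : FreeGroup (Fin 5) →* FreeGroup (Fin 5))
    (hφ1 : φ (FreeGroup.of 0) =
      (FreeGroup.of 0)⁻¹ * FreeGroup.of 4 * (FreeGroup.of 0)⁻¹)
    (hφ2 : φ (FreeGroup.of 1) =
      FreeGroup.of 1 * (FreeGroup.of 4)⁻¹ * FreeGroup.of 0)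
    (hφ3 : φ (FreeGroup.of 2) =
      FreeGroup.of 2 * (FreeGroup.of 1)⁻¹)
    (hφ4 : φ (FreeGroup.of 3) =
      FreeGroup.of 0 * (FreeGroup.of 3)⁻¹ * FreeGroup.of 2)
    (hφ5 : φ (FreeGroup.of 4) =
      FreeGroup.of 0 * (FreeGroup.of 2)⁻¹ * FreeGroup.of 3 * (FreeGroup.of 0)⁻¹)
    (hψ1 : ψ (FreeGroup.of 0) = FreeGroup.of 4 * FreeGroup.of 3)
    (hψ2 : ψ (FreeGroup.of 1) =
      FreeGroup.of 1 * FreeGroup.of 0 * FreeGroup.of 4 * FreeGroup.of 3)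
    (hψ3 : ψ (FreeGroup.of 2) =
      FreeGroup.of 2 * FreeGroup.of 1 * FreeGroup.of 0 * FreeGroup.of 4 * FreeGroup.of 3)
    (hψ4 : ψ (FreeGroup.of 3) =
      FreeGroup.of 2 * FreeGroup.of 1 * FreeGroup.of 0 * (FreeGroup.of 4) ^ 2 * FreeGroup.of 3)
    (hψ5 : ψ (FreeGroup.of 4) =
      FreeGroup.of 4 * FreeGroup.of 3 * FreeGroup.of 0 * FreeGroup.of 4 * FreeGroup.of 3) :
    φ.comp ψ = MonoidHom.id (FreeGroup (Fin 5)) := by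
  have key : ∀ i : Fin 5, φ (ψ (FreeGroup.of i)) = FreeGroup.of i := by
    intro i
    fin_cases i
    · show φ (ψ (FreeGroup.of 0)) = FreeGroup.of 0
      rw [hψ1]; simp only [map_mul, hφ4, hφ5]; group
    · show φ (ψ (FreeGroup.of 1)) = FreeGroup.of 1
      rw [hψ2]; simp only [map_mul, hφ1, hφ2, hφ4, hφ5]; group
    · show φ (ψ (FreeGroup.of 2)) = FreeGroup.of 2
      rw [hψ3]; simp only [map_mul, hφ1, hφ2, hφ3, hφ4, hφ5]; group
    · show φ (ψ (FreeGroup.of 3)) = FreeGroup.of 3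
      rw [hψ4, sq]; simp only [map_mul, hφ1, hφ2, hφ3, hφ4, hφ5]; group
    · show φ (ψ (FreeGroup.of 4)) = FreeGroup.of 4
      rw [hψ5]; simp only [map_mul, hφ1, hφ4, hφ5]; group
  ext i
  exact key i
end

section
/- Let φ : F₅ → F₅ be the group homomorphism determined on generators by φ(γ₁) = u₁⁻¹u₅u₁⁻¹, φ(γ₂) = u₂u₅⁻¹u₁, φ(γ₃) = u₃u₂⁻¹, φ(γ₄) = u₁u₄⁻¹u₃, φ(γ₅) = u₁u₃⁻¹u₄u₁⁻¹, and let ψ : F₅ → F₅ be the group homomorphism determined on generators by ψ(u₁) = γ₅γ₄, ψ(u₂) = γ₂γ₁γ₅γ₄, ψ(u₃) = γ₃γ₂γ₁γ₅γ₄, ψ(u₄) = γ₃γ₂γ₁γ₅²γ₄, ψ(u₅) = γ₅γ₄γ₁γ₅γ₄. Then the composition ψ ∘ φ is the identity homomorphism of F₅. -/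
/-- Example 4.6 of the paper: the composition `ψ ∘ φ` of the Stallings map `φ`
with the explicit map `ψ` is the identity of the free group of rank 5.
Here `γᵢ = uᵢ = FreeGroup.of (i-1)`. -/
theorem stallings_inverse_comp_map_eq_id
    (φ ψ : FreeGroup (Fin 5) →* FreeGroup (Fin 5))
    (hφ1 : φ (FreeGroup.of 0) =
      (FreeGroup.of 0)⁻¹ * FreeGroup.of 4 * (FreeGroup.of 0)⁻¹)
    (hφ2 : φ (FreeGroup.of 1) =
      FreeGroup.of 1 * (FreeGroup.of 4)⁻¹ * FreeGroup.of 0)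
    (hφ3 : φ (FreeGroup.of 2) =
      FreeGroup.of 2 * (FreeGroup.of 1)⁻¹)
    (hφ4 : φ (FreeGroup.of 3) =
      FreeGroup.of 0 * (FreeGroup.of 3)⁻¹ * FreeGroup.of 2)
    (hφ5 : φ (FreeGroup.of 4) =
      FreeGroup.of 0 * (FreeGroup.of 2)⁻¹ * FreeGroup.of 3 * (FreeGroup.of 0)⁻¹)
    (hψ1 : ψ (FreeGroup.of 0) = FreeGroup.of 4 * FreeGroup.of 3)
    (hψ2 : ψ (FreeGroup.of 1) =
      FreeGroup.of 1 * FreeGroup.of 0 * FreeGroup.of 4 * FreeGroup.of 3)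
    (hψ3 : ψ (FreeGroup.of 2) =
      FreeGroup.of 2 * FreeGroup.of 1 * FreeGroup.of 0 * FreeGroup.of 4 * FreeGroup.of 3)
    (hψ4 : ψ (FreeGroup.of 3) =
      FreeGroup.of 2 * FreeGroup.of 1 * FreeGroup.of 0 * (FreeGroup.of 4) ^ 2 * FreeGroup.of 3)
    (hψ5 : ψ (FreeGroup.of 4) =
      FreeGroup.of 4 * FreeGroup.of 3 * FreeGroup.of 0 * FreeGroup.of 4 * FreeGroup.of 3) :
    ψ.comp φ = MonoidHom.id (FreeGroup (Fin 5)) := by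
  ext i
  fin_cases i <;>
    simp only [Fin.reduceFinMk, Fin.isValue, MonoidHom.comp_apply, MonoidHom.id_apply, hφ1, hφ2, hφ3, hφ4, hφ5,
      map_mul, map_inv, map_pow, hψ1, hψ2, hψ3, hψ4, hψ5] <;> group
end

section
/- The five elements u₁⁻¹u₅u₁⁻¹, u₂u₅⁻¹u₁, u₃u₂⁻¹, u₁u₄⁻¹u₃, and u₁u₃⁻¹u₄u₁⁻¹ generate the free group F₅ of rank 5; that is, the subgroup closure of this five-element set is the whole group. -/
/-- Surjectivity of the Stallings map of Example 4.6 of the paper: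
the five displayed words generate the free group of rank 5.
Here `uᵢ = FreeGroup.of (i-1)`. -/
theorem stallings_images_generate :
    Subgroup.closure
      ({(FreeGroup.of 0)⁻¹ * FreeGroup.of 4 * (FreeGroup.of 0)⁻¹,
        FreeGroup.of 1 * (FreeGroup.of 4)⁻¹ * FreeGroup.of 0,
        FreeGroup.of 2 * (FreeGroup.of 1)⁻¹,
        FreeGroup.of 0 * (FreeGroup.of 3)⁻¹ * FreeGroup.of 2,
        FreeGroup.of 0 * (FreeGroup.of 2)⁻¹ * FreeGroup.of 3 * (FreeGroup.of 0)⁻¹} :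
        Set (FreeGroup (Fin 5))) = ⊤ := by
  set S : Set (FreeGroup (Fin 5)) :=
      {(FreeGroup.of 0)⁻¹ * FreeGroup.of 4 * (FreeGroup.of 0)⁻¹,
        FreeGroup.of 1 * (FreeGroup.of 4)⁻¹ * FreeGroup.of 0,
        FreeGroup.of 2 * (FreeGroup.of 1)⁻¹,
        FreeGroup.of 0 * (FreeGroup.of 3)⁻¹ * FreeGroup.of 2,
        FreeGroup.of 0 * (FreeGroup.of 2)⁻¹ * FreeGroup.of 3 * (FreeGroup.of 0)⁻¹}
      with hS
  have ha : (FreeGroup.of 0)⁻¹ * FreeGroup.of 4 * (FreeGroup.of 0)⁻¹ ∈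
      Subgroup.closure S := Subgroup.subset_closure (by simp [hS])
  have hb : FreeGroup.of 1 * (FreeGroup.of 4)⁻¹ * FreeGroup.of 0 ∈
      Subgroup.closure S := Subgroup.subset_closure (by simp [hS])
  have hc : FreeGroup.of 2 * (FreeGroup.of 1)⁻¹ ∈
      Subgroup.closure S := Subgroup.subset_closure (by simp [hS])
  have hd : FreeGroup.of 0 * (FreeGroup.of 3)⁻¹ * FreeGroup.of 2 ∈
      Subgroup.closure S := Subgroup.subset_closure (by simp [hS])
  have he : FreeGroup.of 0 * (FreeGroup.of 2)⁻¹ * FreeGroup.of 3 * (FreeGroup.of 0)⁻¹ ∈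
      Subgroup.closure S := Subgroup.subset_closure (by simp [hS])
  have h0 : (FreeGroup.of 0 : FreeGroup (Fin 5)) ∈ Subgroup.closure S := by
    have := mul_mem he hd
    convert this using 1; group
  have h4 : (FreeGroup.of 4 : FreeGroup (Fin 5)) ∈ Subgroup.closure S := by
    have := mul_mem (mul_mem h0 ha) h0
    convert this using 1; group
  have h1 : (FreeGroup.of 1 : FreeGroup (Fin 5)) ∈ Subgroup.closure S := by
    have := mul_mem (mul_mem hb ha) h0
    convert this using 1; group
  have h2 : (FreeGroup.of 2 : FreeGroup (Fin 5)) ∈ Subgroup.closure S := by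
    have := mul_mem hc h1
    convert this using 1; group
  have h3 : (FreeGroup.of 3 : FreeGroup (Fin 5)) ∈ Subgroup.closure S := by
    have := mul_mem (mul_mem h2 (inv_mem hd)) h0
    convert this using 1; group
  rw [eq_top_iff, ← FreeGroup.closure_range_of, Subgroup.closure_le]
  rintro x ⟨i, rfl⟩
  fin_cases i <;> assumption
end

section
/- For every natural number n, every surjective group homomorphism φ from the free group of rank n to itself is injective (hence a group automorphism). In other words, finitely generated free groups are Hopfian. -/
open Classical in
/-- The partial "shift" map attached to a generator `a` and a reduced word `R`,
as a total function on `ℕ`. -/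
noncomputable def hopfFnat {α : Type} (R : List (α × Bool)) (a : α) (k : ℕ) : ℕ :=
  if R[k]? = some (a, false) then k + 1
  else if 1 ≤ k ∧ R[k-1]? = some (a, true) then k - 1
  else k

/-- The source set of the partial shift map. -/
def hopfS {α : Type} (R : List (α × Bool)) (a : α) : Set (Fin (R.length + 1)) :=
  {k | R[(k : ℕ)]? = some (a, false) ∨ (1 ≤ (k : ℕ) ∧ R[(k : ℕ)-1]? = some (a, true))}

lemma hopfFnat_lt {α : Type} (R : List (α × Bool)) (a : α) (k : ℕ)
    (hk : k < R.length + 1) : hopfFnat R a k < R.length + 1 := by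
  unfold hopfFnat
  split_ifs with h1 h2
  · have : k < R.length := (List.getElem?_eq_some_iff.mp h1).1
    omega
  · omega
  · omega

/-- The partial shift map as a function on `Fin (R.length + 1)`. -/
noncomputable def hopfF {α : Type} (R : List (α × Bool)) (a : α) :
    Fin (R.length + 1) → Fin (R.length + 1) :=
  fun k => ⟨hopfFnat R a (k : ℕ), hopfFnat_lt R a _ k.isLt⟩

/-- A reduced word has no adjacent cancelling pair. -/
lemma hopf_no_cancel {α : Type} [DecidableEq α] {R : List (α × Bool)}
    (hR : FreeGroup.reduce R = R) {k : ℕ} {x : α} {b : Bool}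
    (h1 : R[k]? = some (x, b)) (h2 : R[k+1]? = some (x, !b)) : False := by
  obtain ⟨hk, hv⟩ := List.getElem?_eq_some_iff.mp h1
  obtain ⟨hk2, hv2⟩ := List.getElem?_eq_some_iff.mp h2
  have hdecomp : R = R.take k ++ (x, b) :: (x, !b) :: R.drop (k + 2) := by
    conv_lhs => rw [← List.take_append_drop k R]
    congr 1
    rw [List.drop_eq_getElem_cons hk, hv]
    congr 1
    rw [List.drop_eq_getElem_cons hk2, hv2]
  exact FreeGroup.reduce.not (hR.trans hdecomp)

section

variable {α : Type} [DecidableEq α] {R : List (α × Bool)} (hR : FreeGroup.reduce R = R) (a : α)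

include hR

lemma hopfFnat_injOn {k1 k2 : ℕ}
    (m1 : R[k1]? = some (a, false) ∨ (1 ≤ k1 ∧ R[k1-1]? = some (a, true)))
    (m2 : R[k2]? = some (a, false) ∨ (1 ≤ k2 ∧ R[k2-1]? = some (a, true)))
    (hval : hopfFnat R a k1 = hopfFnat R a k2) : k1 = k2 := by
  have nAB : ∀ k : ℕ, 1 ≤ k → R[k-1]? = some (a, true) → ¬ (R[k]? = some (a, false)) := by
    intro k hk h hcon
    apply hopf_no_cancel hR h
    have : k - 1 + 1 = k := by omega
    rw [this]
    simpa using hcon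
  rcases m1 with h1 | h1 <;> rcases m2 with h2 | h2
  · rw [hopfFnat, if_pos h1, hopfFnat, if_pos h2] at hval; omega
  · rw [hopfFnat, if_pos h1, hopfFnat, if_neg (nAB k2 h2.1 h2.2), if_pos h2] at hval
    -- k1 + 1 = k2 - 1 forces an adjacent cancelling pair
    exfalso
    have hk2' : k2 - 1 = k1 + 1 := by omega
    apply hopf_no_cancel hR h1
    have := h2.2
    rw [hk2'] at this
    simpa using this
  · rw [hopfFnat, if_neg (nAB k1 h1.1 h1.2), if_pos h1, hopfFnat, if_pos h2] at hval
    exfalso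
    have hk1' : k1 - 1 = k2 + 1 := by omega
    apply hopf_no_cancel hR h2
    have := h1.2
    rw [hk1'] at this
    simpa using this
  · rw [hopfFnat, if_neg (nAB k1 h1.1 h1.2), if_pos h1,
      hopfFnat, if_neg (nAB k2 h2.1 h2.2), if_pos h2] at hval
    omega

lemma hopfF_injOn : Set.InjOn (hopfF R a) (hopfS R a) := by
  intro k1 m1 k2 m2 heq
  exact Fin.ext (hopfFnat_injOn hR a m1 m2 (congrArg Fin.val heq))

open Classical in
/-- The permutation attached to a generator `a` and a reduced word `R`. -/
noncomputable def hopfPerm : Equiv.Perm (Fin (R.length + 1)) :=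
  Equiv.extendSubtype
    (p := fun k => k ∈ hopfS R a) (q := fun k => k ∈ hopfF R a '' hopfS R a)
    ((hopfF_injOn hR a).bijOn_image.equiv _)

lemma hopfPerm_apply_mem {k : Fin (R.length + 1)} (hk : k ∈ hopfS R a) :
    hopfPerm hR a k = hopfF R a k := by
  classical
  rw [hopfPerm]
  rw [Equiv.extendSubtype_apply_of_mem _ k hk]
  rfl

lemma hopfPerm_neg {k : ℕ} (h : R[k]? = some (a, false)) :
    ∀ (h1 : k < R.length + 1) (h2 : k + 1 < R.length + 1),
      hopfPerm hR a ⟨k, h1⟩ = ⟨k + 1, h2⟩ := by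
  intro h1 h2
  have hmem : (⟨k, h1⟩ : Fin (R.length + 1)) ∈ hopfS R a := Or.inl h
  rw [hopfPerm_apply_mem hR a hmem]
  apply Fin.ext
  show hopfFnat R a k = k + 1
  rw [hopfFnat, if_pos h]

lemma hopfPerm_pos {k : ℕ} (h : R[k]? = some (a, true)) :
    ∀ (h1 : k + 1 < R.length + 1) (h2 : k < R.length + 1),
      hopfPerm hR a ⟨k + 1, h1⟩ = ⟨k, h2⟩ := by
  intro h1 h2
  have hB : 1 ≤ k + 1 ∧ R[(k+1)-1]? = some (a, true) := ⟨by omega, by simpa using h⟩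
  have hmem : (⟨k + 1, h1⟩ : Fin (R.length + 1)) ∈ hopfS R a := Or.inr hB
  rw [hopfPerm_apply_mem hR a hmem]
  apply Fin.ext
  show hopfFnat R a (k + 1) = k
  have hA : ¬ (R[k+1]? = some (a, false)) := fun hcon =>
    hopf_no_cancel hR h (by simpa using hcon)
  rw [hopfFnat, if_neg hA, if_pos hB]
  omega

end

/-- Residual finiteness of free groups: any nontrivial element survives in a
finite symmetric group quotient. -/
lemma freeGroup_exists_perm_hom {α : Type} [DecidableEq α] (w : FreeGroup α) (hw : w ≠ 1) :
    ∃ (N : ℕ) (f : FreeGroup α →* Equiv.Perm (Fin N)), f w ≠ 1 := by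
  set R : List (α × Bool) := (w⁻¹).toWord with hRdef
  have hR : FreeGroup.reduce R = R := FreeGroup.reduce_toWord _
  have hinv : FreeGroup.invRev R = w.toWord := by
    rw [hRdef, FreeGroup.toWord_inv, FreeGroup.invRev_invRev]
  refine ⟨R.length + 1, FreeGroup.lift (fun a => hopfPerm hR a), ?_⟩
  -- key evaluation: the product over any suffix of `w.toWord` moves 0 up by the length
  have key : ∀ (t l' : List (α × Bool)), w.toWord = l' ++ t →
      ∀ (h0 : (0:ℕ) < R.length + 1) (ht : t.length < R.length + 1),
      (t.map fun x => cond x.2 (hopfPerm hR x.1) (hopfPerm hR x.1)⁻¹).prod ⟨0, h0⟩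
        = ⟨t.length, ht⟩ := by
    intro t
    induction t with
    | nil => intro l' _ h0 ht; rfl
    | cons x t ih =>
      intro l' hsplit h0 ht
      obtain ⟨a, c⟩ := x
      have ht' : t.length + 1 < R.length + 1 := by simpa using ht
      have hlen : t.length < R.length + 1 := by omega
      have hrec := ih (l' ++ [(a, c)]) (by simpa using hsplit) h0 hlen
      have hRt : R[t.length]? = some (a, !c) := by
        have hsplit' : R = FreeGroup.invRev (l' ++ (a, c) :: t) := by
          rw [← hsplit, ← hinv, FreeGroup.invRev_invRev]
        have hre : FreeGroup.invRev (l' ++ (a, c) :: t)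
            = FreeGroup.invRev t ++ ((a, !c) :: FreeGroup.invRev l') := by
          simp [FreeGroup.invRev]
        have harr := List.getElem?_append_right
          (l₁ := FreeGroup.invRev t) (l₂ := (a, !c) :: FreeGroup.invRev l')
          (i := t.length) (by simp [FreeGroup.invRev_length])
        rw [hsplit', hre, harr]
        simp [FreeGroup.invRev_length]
      simp only [List.map_cons, List.prod_cons, Equiv.Perm.mul_apply, hrec]
      cases c with
      | true =>
        simp only [cond_true]
        have := hopfPerm_neg hR a (by simpa using hRt) hlen ht'
        rw [this]
        exact Fin.ext (by simp)
      | false =>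
        simp only [cond_false]
        have := hopfPerm_pos hR a (by simpa using hRt) ht' hlen
        rw [show ((⟨((a, false) :: t).length, ht⟩ : Fin (R.length + 1)))
            = ⟨t.length + 1, ht'⟩ from Fin.ext (by simp), ← this,
          Equiv.Perm.inv_def, Equiv.symm_apply_apply]
  intro hcon
  have h0 : (0:ℕ) < R.length + 1 := by omega
  have hlenR : w.toWord.length = R.length := by
    rw [← hinv, FreeGroup.invRev_length]
  have htw : w.toWord.length < R.length + 1 := by omega
  have heval := key w.toWord [] rfl h0 htw
  have hlift : (FreeGroup.lift fun a => hopfPerm hR a) w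
      = (w.toWord.map fun x => cond x.2 (hopfPerm hR x.1) (hopfPerm hR x.1)⁻¹).prod := by
    conv_lhs => rw [← FreeGroup.mk_toWord (x := w)]
    exact FreeGroup.lift_mk
  rw [hcon] at hlift
  have h01 : (⟨0, h0⟩ : Fin (R.length + 1)) = ⟨w.toWord.length, htw⟩ := by
    rw [← heval, ← hlift]; rfl
  have hlen0 : w.toWord.length = 0 := by
    have := congrArg Fin.val h01
    simpa using this.symm
  exact hw (FreeGroup.toWord_eq_nil_iff.mp (List.length_eq_zero_iff.mp hlen0))

/-- Finitely generated free groups are Hopfian: every surjective endomorphism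
of the free group of rank `n` is injective (hence an automorphism). -/
theorem freeGroup_hopfian (n : ℕ) (φ : FreeGroup (Fin n) →* FreeGroup (Fin n))
    (hsurj : Function.Surjective φ) : Function.Injective φ := by
  rw [injective_iff_map_eq_one φ]
  intro w hw
  by_contra hne
  obtain ⟨N, f, hf⟩ := freeGroup_exists_perm_hom w hne
  -- Hom set is finite
  have hfin : Finite (FreeGroup (Fin n) →* Equiv.Perm (Fin N)) := by
    apply Finite.of_injective (fun g => fun i => g (FreeGroup.of i))
    intro g1 g2 h
    exact FreeGroup.ext_hom g1 g2 fun a => congrFun h a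
  -- precomposition with φ is injective, hence surjective
  have hinj : Function.Injective
      (fun g : FreeGroup (Fin n) →* Equiv.Perm (Fin N) => g.comp φ) := by
    intro g1 g2 h
    refine MonoidHom.ext fun x => ?_
    obtain ⟨y, rfl⟩ := hsurj x
    exact DFunLike.congr_fun h y
  obtain ⟨g, hg⟩ := (Finite.injective_iff_surjective.mp hinj) f
  have : f w = 1 := by
    rw [← hg]
    show g (φ w) = 1
    rw [hw, map_one]
  exact hf this
end
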